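/- Let Φ ∈ 𝒮(ℝ) be a Schwartz function and n₀ ∈ ℕ. Define for Re(s) > 0 the function Z(s) = ∫_{ℝˣ} Φ(a)|a|^s (log|a|)^{n₀} da/|a|. Then s^{n₀+1}·Z(s), initially defined for Re(s) > 0, extends to a function holomorphic on a neighborhood of s = 0 when restricted to even Schwartz functions Φ with Φ(0) arbitrary; more precisely, Z(s) - 2Φ(0)·(-1)^{n₀} n₀! / s^{n₀+1} extends holomorphically past Re(s) > -1. -/

import Mathlib

/-!
By evenness, `Z(s)` is twice the Mellin transform of `f(t) = Φ(t) (log t)^n₀`. Split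
`f = g + Φ(0) (log t)^n₀ 𝟙_{(0,1]}`. Since `Φ(t) - Φ(0) = O(t)` at `0` and `Φ` decays rapidly
at `∞`, the Mellin transform of `g` is holomorphic on `Re s > -1`. The Mellin transform of
`(log t)^n 𝟙_{(0,1]}` is the `n`-th derivative of that of `𝟙_{(0,1]}`, namely of `1/s`, which
gives the principal part `(-1)^n n! / s^(n+1)`.
-/

open MeasureTheory Set Filter Asymptotics Real Topology

theorem rpow_neg_isBigO_rpow_neg_nhdsGT_zero {a b : ℝ} (hab : a ≤ b) :
    (fun x : ℝ ↦ x ^ (-a)) =O[𝓝[>] 0] (· ^ (-b)) := by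
  refine IsBigO.of_bound 1 ?_
  filter_upwards [Ioc_mem_nhdsGT one_pos] with x hx
  rw [one_mul, norm_of_nonneg (rpow_nonneg hx.1.le _), norm_of_nonneg (rpow_nonneg hx.1.le _)]
  exact rpow_le_rpow_of_exponent_ge hx.1 hx.2 (neg_le_neg hab)

theorem rpow_neg_isBigO_rpow_neg_atTop {a b : ℝ} (hba : b ≤ a) :
    (fun x : ℝ ↦ x ^ (-a)) =O[atTop] (· ^ (-b)) := by
  refine IsBigO.of_bound 1 ?_
  filter_upwards [eventually_ge_atTop 1] with x hx
  have hx0 : 0 ≤ x := zero_le_one.trans hx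
  rw [one_mul, norm_of_nonneg (rpow_nonneg hx0 _), norm_of_nonneg (rpow_nonneg hx0 _)]
  exact rpow_le_rpow_of_exponent_le hx (neg_le_neg hba)

theorem indicator_Ioc_eventuallyEq_zero_atTop {E : Type*} [Zero E] (c : E) :
    (Ioc (0 : ℝ) 1).indicator (fun _ ↦ c) =ᶠ[atTop] 0 := by
  filter_upwards [eventually_gt_atTop 1] with t ht
  exact indicator_of_notMem (fun h ↦ ht.not_ge h.2) _

theorem locallyIntegrableOn_indicator_Ioc {E : Type*} [NormedAddCommGroup E] (c : E) :
    LocallyIntegrableOn ((Ioc (0 : ℝ) 1).indicator fun _ ↦ c) (Ioi 0) :=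
  ((integrableOn_const measure_Ioc_lt_top.ne).integrable_indicator
    measurableSet_Ioc).integrableOn.locallyIntegrableOn

section LogPow

variable {E : Type*} [NormedAddCommGroup E] [NormedSpace ℝ E]

theorem isBigO_rpow_zero_log_pow_smul {a b : ℝ} {f : ℝ → E} (n : ℕ) (hab : a < b)
    (hf : f =O[𝓝[>] 0] (· ^ (-a))) :
    (fun t : ℝ ↦ log t ^ n • f t) =O[𝓝[>] 0] (· ^ (-b)) := by
  induction n generalizing b with
  | zero => simpa using hf.trans (rpow_neg_isBigO_rpow_neg_nhdsGT_zero hab.le)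
  | succ n ih =>
    simpa only [pow_succ', mul_smul] using
      isBigO_rpow_zero_log_smul (add_div_two_lt_right.2 hab) (ih (left_lt_add_div_two.2 hab))

theorem isBigO_rpow_top_log_pow_smul {a b : ℝ} {f : ℝ → E} (n : ℕ) (hba : b < a)
    (hf : f =O[atTop] (· ^ (-a))) :
    (fun t : ℝ ↦ log t ^ n • f t) =O[atTop] (· ^ (-b)) := by
  induction n generalizing b with
  | zero => simpa using hf.trans (rpow_neg_isBigO_rpow_neg_atTop hba.le)
  | succ n ih =>
    simpa only [pow_succ', mul_smul] using
      isBigO_rpow_top_log_smul (left_lt_add_div_two.2 hba) (ih (add_div_two_lt_right.2 hba))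

end LogPow

section MellinLogPow

variable {E : Type*} [NormedAddCommGroup E] [NormedSpace ℂ E]

theorem mellin_log_pow_smul_hasDerivAt {b : ℝ} {f : ℝ → E} {s : ℂ} (n : ℕ)
    (hfc : LocallyIntegrableOn f (Ioi 0)) (hf_top : ∀ a : ℝ, f =O[atTop] (· ^ (-a)))
    (hf_bot : f =O[𝓝[>] 0] (· ^ (-b))) (hs : b < s.re) :
    MellinConvergent (fun t ↦ log t ^ n • f t) s ∧
      HasDerivAt (mellin fun t ↦ log t ^ n • f t) (mellin (fun t ↦ log t ^ (n + 1) • f t) s) s := by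
  have hgc : LocallyIntegrableOn (fun t ↦ log t ^ n • f t) (Ioi 0) :=
    hfc.continuousOn_smul isOpen_Ioi.isLocallyClosed
      ((continuousOn_log.mono fun _ ↦ ne_of_gt).pow n)
  have hg_top := isBigO_rpow_top_log_pow_smul n (lt_add_one (s.re + 1)) (hf_top (s.re + 1 + 1))
  have hg_bot := isBigO_rpow_zero_log_pow_smul n (left_lt_add_div_two.2 hs) hf_bot
  refine ⟨mellinConvergent_of_isBigO_rpow hgc hg_top (lt_add_one _) hg_bot
    (add_div_two_lt_right.2 hs), ?_⟩
  simpa only [pow_succ', mul_smul] using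
    (mellin_hasDerivAt_of_isBigO_rpow hgc hg_top (lt_add_one _) hg_bot
      (add_div_two_lt_right.2 hs)).2

end MellinLogPow

open Nat in
theorem hasMellin_log_pow_smul_indicator_Ioc (n : ℕ) {s : ℂ} (hs : 0 < s.re) :
    HasMellin (fun t ↦ log t ^ n • (Ioc 0 1).indicator (fun _ ↦ (1 : ℂ)) t) s
      ((-1) ^ n * n ! / s ^ (n + 1)) := by
  set χ := (Ioc (0 : ℝ) 1).indicator fun _ ↦ (1 : ℂ)
  have hχ_top (a : ℝ) : χ =O[atTop] (· ^ (-a)) :=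
    (indicator_Ioc_eventuallyEq_zero_atTop 1).trans_isBigO (isBigO_zero _ _)
  have hχ_bot : χ =O[𝓝[>] 0] (· ^ (-(0 : ℝ))) := by
    refine IsBigO.of_bound 1 (Eventually.of_forall fun t ↦ ?_)
    rw [neg_zero, rpow_zero, norm_one, mul_one]
    exact norm_indicator_le_norm_self _ _ |>.trans_eq norm_one
  have hχ_mellin (m : ℕ) {s : ℂ} (hs : 0 < s.re) :=
    mellin_log_pow_smul_hasDerivAt m (locallyIntegrableOn_indicator_Ioc 1) hχ_top hχ_bot hs
  refine ⟨(hχ_mellin n hs).1, ?_⟩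
  induction n generalizing s with
  | zero => simpa using (hasMellin_one_Ioc hs).2
  | succ n ih =>
    have hs0 : s ≠ 0 := by rintro rfl; simp at hs
    have hmellin : (fun z : ℂ ↦ (-1) ^ n * n ! * (z ^ (n + 1))⁻¹) =ᶠ[𝓝 s]
        mellin fun t ↦ log t ^ n • χ t := by
      filter_upwards [(isOpen_lt continuous_const Complex.continuous_re).mem_nhds hs] with z hz
      rw [ih hz, div_eq_mul_inv]
    have hderiv : HasDerivAt (fun z : ℂ ↦ (-1) ^ n * n ! * (z ^ (n + 1))⁻¹)
        ((-1) ^ (n + 1) * (n + 1)! / s ^ (n + 1 + 1)) s := by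
      refine (((hasDerivAt_pow (n + 1) s).inv (pow_ne_zero _ hs0)).const_mul _).congr_deriv ?_
      rw [factorial_succ, Nat.add_sub_cancel]
      push_cast
      field_simp
      ring
    exact ((hχ_mellin n hs).2.congr_of_eventuallyEq hmellin).unique hderiv

namespace SchwartzMap

section Real

variable {E : Type*} [NormedAddCommGroup E] [NormedSpace ℝ E]

theorem isBigO_atTop_rpow_neg (Φ : 𝓢(ℝ, E)) (a : ℝ) : (Φ : ℝ → E) =O[atTop] (· ^ (-a)) := by
  refine ((Φ.isBigO_cocompact_rpow (-a)).mono atTop_le_cocompact).congr' .rfl ?_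
  filter_upwards [eventually_ge_atTop 0] with x hx
  rw [norm_of_nonneg hx]

theorem sub_indicator_Ioc_isBigO_nhdsGT_zero (Φ : 𝓢(ℝ, E)) :
    (fun t ↦ Φ t - (Ioc 0 1).indicator (fun _ ↦ Φ 0) t) =O[𝓝[>] 0] (· ^ (-(-1 : ℝ))) := by
  refine (Φ.differentiableAt.hasDerivAt.isBigO_sub.mono nhdsWithin_le_nhds).congr' ?_ ?_
  · filter_upwards [Ioc_mem_nhdsGT one_pos] with t ht
    rw [indicator_of_mem ht]
  · filter_upwards [self_mem_nhdsWithin] with t (ht : 0 < t)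
    rw [neg_neg, rpow_one, sub_zero]

end Real

variable {E : Type*} [NormedAddCommGroup E] [NormedSpace ℂ E]

theorem mellin_log_pow_smul_sub_indicator_Ioc (Φ : 𝓢(ℝ, E)) (n : ℕ) {s : ℂ}
    (hs : -1 < s.re) :
    MellinConvergent (fun t ↦ log t ^ n • (Φ t - (Ioc 0 1).indicator (fun _ ↦ Φ 0) t)) s ∧
      DifferentiableAt ℂ
        (mellin fun t ↦ log t ^ n • (Φ t - (Ioc 0 1).indicator (fun _ ↦ Φ 0) t)) s := by
  have hFc : LocallyIntegrableOn (fun t ↦ Φ t - (Ioc 0 1).indicator (fun _ ↦ Φ 0) t) (Ioi 0) :=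
    (Φ.continuous.locallyIntegrable.locallyIntegrableOn _).sub
      (locallyIntegrableOn_indicator_Ioc _)
  have hF_top (a : ℝ) :
      (fun t ↦ Φ t - (Ioc 0 1).indicator (fun _ ↦ Φ 0) t) =O[atTop] (· ^ (-a)) := by
    refine EventuallyEq.trans_isBigO ?_ (Φ.isBigO_atTop_rpow_neg a)
    filter_upwards [indicator_Ioc_eventuallyEq_zero_atTop (Φ 0)] with t ht
    rw [ht, Pi.zero_apply, sub_zero]
  have h := mellin_log_pow_smul_hasDerivAt n hFc hF_top Φ.sub_indicator_Ioc_isBigO_nhdsGT_zero hs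
  exact ⟨h.1, h.2.differentiableAt⟩

end SchwartzMap

theorem integral_comp_abs_eq_two_smul {E : Type*} [NormedAddCommGroup E] [NormedSpace ℝ E]
    (f : ℝ → E) :
    ∫ x, f |x| = (2 : ℝ) • ∫ x in Ioi 0, f x := by
  have hIoi : ∫ x in Ioi 0, f |x| = ∫ x in Ioi 0, f x :=
    setIntegral_congr_fun measurableSet_Ioi fun x hx ↦ by rw [abs_of_pos hx]
  by_cases hf : IntegrableOn (fun x ↦ f |x|) (Ioi 0)
  · have hIic : IntegrableOn (fun x ↦ f |x|) (Iic 0) := by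
      have := (Measure.measurePreserving_neg (volume : Measure ℝ)).integrableOn_comp_preimage
        (Homeomorph.neg ℝ).measurableEmbedding (f := fun x ↦ f |x|) (s := Iic 0)
      simp only [Function.comp_def, abs_neg, neg_preimage, neg_Iic, neg_zero] at this
      exact this.1 ((integrableOn_Ici_iff_integrableOn_Ioi).2 hf)
    have hIic_eq : ∫ x in Iic 0, f |x| = ∫ x in Ioi 0, f x := by
      rw [← neg_zero, ← integral_comp_neg_Iic, neg_zero]
      exact setIntegral_congr_fun measurableSet_Iic fun x hx ↦ by rw [abs_of_nonpos hx]
    rw [← intervalIntegral.integral_Iic_add_Ioi hIic hf, hIic_eq, hIoi, two_smul]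
  · rw [integral_undef fun h ↦ hf h.integrableOn, ← hIoi, integral_undef hf, smul_zero]

theorem integral_even_mul_abs_cpow_mul_log_pow {Φ : ℝ → ℂ} (hΦ : Function.Even Φ) (n : ℕ)
    (s : ℂ) :
    ∫ a : ℝ, Φ a * ((|a| : ℝ) : ℂ) ^ s * ((log |a| : ℝ) : ℂ) ^ n * ((|a| : ℝ) : ℂ)⁻¹ =
      2 * mellin (fun t ↦ log t ^ n • Φ t) s := by
  have hΦ_abs (a : ℝ) : Φ a = Φ |a| := by
    rcases abs_choice a with h | h <;> rw [h]
    exact (hΦ a).symm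
  have hΦ_comp_abs := integral_comp_abs_eq_two_smul
    fun t : ℝ ↦ Φ t * (t : ℂ) ^ s * (log t : ℂ) ^ n * (t : ℂ)⁻¹
  simp only [← hΦ_abs] at hΦ_comp_abs
  rw [hΦ_comp_abs, Complex.real_smul, Complex.ofReal_ofNat, mellin]
  congr 1
  refine setIntegral_congr_fun measurableSet_Ioi fun t (ht : 0 < t) ↦ ?_
  rw [smul_eq_mul, Complex.real_smul, Complex.cpow_sub _ _ (Complex.ofReal_ne_zero.2 ht.ne'),
    Complex.cpow_one, Complex.ofReal_pow]
  ring

/-- For an even Schwartz function `Φ` and `n₀ ∈ ℕ`, the Mellin-type zeta integral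
`Z(s) = ∫_{ℝˣ} Φ(a)|a|^s (log|a|)^{n₀} da/|a|` (defined for `Re(s) > 0`) differs from the
principal part `2Φ(0)·(-1)^{n₀} n₀! / s^{n₀+1}` by a function holomorphic on
`Re(s) > -1`; in particular `s^{n₀+1}·Z(s)` extends holomorphically past `s = 0`. -/
theorem mellin_meromorphic_continuation
    (Φ : SchwartzMap ℝ ℂ) (n₀ : ℕ)
    (heven : ∀ a : ℝ, Φ (-a) = Φ a)
    (Z : ℂ → ℂ)
    (hZ : ∀ s : ℂ, Z s = ∫ a : ℝ, Φ a * ((|a| : ℝ) : ℂ) ^ s *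
      ((Real.log |a| : ℝ) : ℂ) ^ n₀ * (((|a| : ℝ) : ℂ))⁻¹) :
    ∃ Ψ : ℂ → ℂ,
      (∀ s : ℂ, -1 < s.re → DifferentiableAt ℂ Ψ s) ∧
      (∀ s : ℂ, 0 < s.re →
        Z s = Ψ s + 2 * Φ 0 * (-1) ^ n₀ * (Nat.factorial n₀ : ℂ) / s ^ (n₀ + 1)) := by
  set χ := (Ioc (0 : ℝ) 1).indicator fun _ ↦ (1 : ℂ)
  have hsplit : (fun t ↦ log t ^ n₀ • Φ t) = fun t ↦
      log t ^ n₀ • (Φ t - (Ioc 0 1).indicator (fun _ ↦ Φ 0) t) + Φ 0 • (log t ^ n₀ • χ t) := by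
    ext t
    by_cases ht : t ∈ Ioc 0 1 <;> simp [χ, ht, smul_sub, mul_comm (Φ 0)]
  refine ⟨fun s ↦ 2 * mellin (fun t ↦ log t ^ n₀ • (Φ t - (Ioc 0 1).indicator (fun _ ↦ Φ 0) t)) s,
    fun s hs ↦ (Φ.mellin_log_pow_smul_sub_indicator_Ioc n₀ hs).2.const_mul 2, fun s hs ↦ ?_⟩
  have hχ := hasMellin_log_pow_smul_indicator_Ioc n₀ hs
  have hsum := hasMellin_add (Φ.mellin_log_pow_smul_sub_indicator_Ioc n₀ (by linarith)).1
    (hχ.1.const_smul (Φ 0))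
  rw [hZ, integral_even_mul_abs_cpow_mul_log_pow heven, hsplit, hsum.2, mellin_const_smul, hχ.2,
    smul_eq_mul]
  ring
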